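/- Suppose log f(·;y) is C-Lipschitz and the approximate transport map T̂ satisfies ‖T(z) - T̂(z)‖ ≤ ε for all z. Then the exact pullback posterior φ^y(z) ∝ f(T(z);y)φ⁰(z) and the approximate pullback posterior φ̂^y(z) ∝ f(T̂(z);y)φ⁰(z) satisfy D_Hell(φ̂^y, φ^y)² ≤ 1 - e^{-Cε}. -/
import Mathlib


open Real MeasureTheory

/-- Standard Gaussian density on `ℝ^d`. -/
noncomputable def gaussDens (d : ℕ) (z : EuclideanSpace ℝ (Fin d)) : ℝ :=
  (2 * Real.pi) ^ (-(d : ℝ) / 2) * Real.exp (-‖z‖ ^ 2 / 2)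

lemma gaussDens_pos (d : ℕ) (z : EuclideanSpace ℝ (Fin d)) : 0 < gaussDens d z := by
  unfold gaussDens
  have := Real.pi_pos
  positivity

theorem hellinger_bound_approximate_transport (d : ℕ) (C ε : ℝ) (hC : 0 ≤ C) (hε : 0 ≤ ε)
    (f : EuclideanSpace ℝ (Fin d) → ℝ) (hf_pos : ∀ x, 0 < f x)
    (hf_lip : ∀ x x', |Real.log (f x) - Real.log (f x')| ≤ C * ‖x - x'‖)
    (T That : EuclideanSpace ℝ (Fin d) → EuclideanSpace ℝ (Fin d))
    (hTT : ∀ z, ‖T z - That z‖ ≤ ε)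
    (Z Zhat : ℝ)
    (hZ : Z = ∫ z, f (T z) * gaussDens d z) (hZ_pos : 0 < Z)
    (hZhat : Zhat = ∫ z, f (That z) * gaussDens d z) (hZhat_pos : 0 < Zhat)
    (hint : Integrable (fun z => f (T z) * gaussDens d z))
    (hint' : Integrable (fun z => f (That z) * gaussDens d z)) :
    1 - ∫ z, Real.sqrt ((Zhat⁻¹ * f (That z) * gaussDens d z) * (Z⁻¹ * f (T z) * gaussDens d z))
      ≤ 1 - Real.exp (-C * ε) := by
  have hφ : ∀ z, 0 < gaussDens d z := gaussDens_pos d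
  -- pointwise comparisons
  have hlip : ∀ z, |Real.log (f (T z)) - Real.log (f (That z))| ≤ C * ε := by
    intro z
    refine (hf_lip (T z) (That z)).trans ?_
    exact mul_le_mul_of_nonneg_left (hTT z) hC
  have key : ∀ z, Real.exp (-(C * ε)) * f (T z) ≤ f (That z) := by
    intro z
    have h3 : Real.log (f (T z)) - Real.log (f (That z)) ≤ C * ε := (abs_le.mp (hlip z)).2
    calc Real.exp (-(C * ε)) * f (T z)
        = Real.exp (-(C * ε) + Real.log (f (T z))) := by
          rw [Real.exp_add, Real.exp_log (hf_pos _)]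
      _ ≤ Real.exp (Real.log (f (That z))) := Real.exp_le_exp.mpr (by linarith)
      _ = f (That z) := Real.exp_log (hf_pos _)
  have key' : ∀ z, Real.exp (-(C * ε)) * f (That z) ≤ f (T z) := by
    intro z
    have h3 : Real.log (f (That z)) - Real.log (f (T z)) ≤ C * ε := by
      have := (abs_le.mp (hlip z)).1; linarith
    calc Real.exp (-(C * ε)) * f (That z)
        = Real.exp (-(C * ε) + Real.log (f (That z))) := by
          rw [Real.exp_add, Real.exp_log (hf_pos _)]
      _ ≤ Real.exp (Real.log (f (T z))) := Real.exp_le_exp.mpr (by linarith)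
      _ = f (T z) := Real.exp_log (hf_pos _)
  -- normalization constant comparison : exp(-Cε) * Zhat ≤ Z
  have hZZ : Real.exp (-(C * ε)) * Zhat ≤ Z := by
    rw [hZhat, hZ, ← integral_const_mul]
    refine integral_mono (hint'.const_mul _) hint ?_
    intro z
    simp only
    rw [← mul_assoc]
    exact mul_le_mul_of_nonneg_right (key' z) (hφ z).le
  -- the integrand and its lower bound
  set g : EuclideanSpace ℝ (Fin d) → ℝ := fun z =>
    Real.sqrt ((Zhat⁻¹ * f (That z) * gaussDens d z) * (Z⁻¹ * f (T z) * gaussDens d z)) with hg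
  set A : ℝ := Zhat⁻¹ * Z⁻¹ * Real.exp (-(C * ε)) with hA
  have hZi : (0:ℝ) < Z⁻¹ := inv_pos.mpr hZ_pos
  have hZhi : (0:ℝ) < Zhat⁻¹ := inv_pos.mpr hZhat_pos
  have hA_pos : 0 < A := by rw [hA]; exact mul_pos (mul_pos hZhi hZi) (Real.exp_pos _)
  have hlb : ∀ z, Real.sqrt A * (f (T z) * gaussDens d z) ≤ g z := by
    intro z
    have h1 : 0 ≤ f (T z) * gaussDens d z := mul_nonneg (hf_pos _).le (hφ z).le
    have h2 : Real.sqrt A * (f (T z) * gaussDens d z)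
        = Real.sqrt (A * (f (T z) * gaussDens d z) ^ 2) := by
      rw [Real.sqrt_mul hA_pos.le, Real.sqrt_sq h1]
    rw [h2, hg]
    apply Real.sqrt_le_sqrt
    have hk := key z
    have h4 : 0 < gaussDens d z := hφ z
    have h5 : 0 < f (T z) := hf_pos (T z)
    have h6 := hZhi
    have h7 := hZi
    rw [hA]
    nlinarith [mul_le_mul_of_nonneg_right hk (mul_pos (mul_pos (mul_pos h6 h7) h4)
      (mul_pos h4 h5)).le]
  -- integrability of g
  have hg_int : Integrable g := by
    have hmeas : AEStronglyMeasurable g (volume) := by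
      have h1 : AEStronglyMeasurable (fun z => f (That z) * gaussDens d z) volume :=
        hint'.aestronglyMeasurable
      have h2 : AEStronglyMeasurable (fun z => f (T z) * gaussDens d z) volume :=
        hint.aestronglyMeasurable
      have h3 : AEStronglyMeasurable (fun z =>
          (Zhat⁻¹ * f (That z) * gaussDens d z) * (Z⁻¹ * f (T z) * gaussDens d z)) volume := by
        have := ((h1.const_mul Zhat⁻¹).mul (h2.const_mul Z⁻¹))
        refine this.congr (Filter.Eventually.of_forall fun z => ?_)
        simp only [Pi.mul_apply]
        ring
      exact Real.continuous_sqrt.comp_aestronglyMeasurable h3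
    refine Integrable.mono (((hint'.const_mul Zhat⁻¹).add (hint.const_mul Z⁻¹)).div_const 2)
      hmeas (Filter.Eventually.of_forall fun z => ?_)
    have h4 : 0 < gaussDens d z := hφ z
    have ha : 0 ≤ Zhat⁻¹ * f (That z) * gaussDens d z :=
      mul_nonneg (mul_nonneg hZhi.le (hf_pos _).le) h4.le
    have hb : 0 ≤ Z⁻¹ * f (T z) * gaussDens d z :=
      mul_nonneg (mul_nonneg hZi.le (hf_pos _).le) h4.le
    simp only [Pi.add_apply]
    rw [Real.norm_eq_abs, Real.norm_eq_abs, abs_of_nonneg (Real.sqrt_nonneg _),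
      abs_of_nonneg (by nlinarith : (0:ℝ) ≤ (Zhat⁻¹ * (f (That z) * gaussDens d z) + Z⁻¹ * (f (T z) * gaussDens d z)) / 2)]
    have hge : g z = Real.sqrt (Zhat⁻¹ * f (That z) * gaussDens d z * (Z⁻¹ * f (T z) * gaussDens d z)) := rfl
    rw [Real.sqrt_mul ha]
    have hsa := Real.sq_sqrt ha
    have hsb := Real.sq_sqrt hb
    nlinarith [sq_nonneg (Real.sqrt (Zhat⁻¹ * f (That z) * gaussDens d z)
      - Real.sqrt (Z⁻¹ * f (T z) * gaussDens d z)), Real.sqrt_nonneg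
      (Zhat⁻¹ * f (That z) * gaussDens d z), Real.sqrt_nonneg (Z⁻¹ * f (T z) * gaussDens d z)]
  -- lower bound on the integral
  have hint_lb : Real.sqrt A * Z ≤ ∫ z, g z := by
    have h1 : (∫ z, Real.sqrt A * (f (T z) * gaussDens d z)) = Real.sqrt A * Z := by
      rw [integral_const_mul, hZ]
    rw [← h1]
    refine integral_mono_of_nonneg (Filter.Eventually.of_forall fun z => ?_) hg_int
      (Filter.Eventually.of_forall hlb)
    have := hφ z
    have := hf_pos (T z)
    positivity
  -- final : exp(-Cε) ≤ √A * Z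
  have hfinal : Real.exp (-(C * ε)) ≤ Real.sqrt A * Z := by
    have h1 : Real.sqrt A * Z = Real.sqrt (A * Z ^ 2) := by
      rw [Real.sqrt_mul hA_pos.le, Real.sqrt_sq hZ_pos.le]
    rw [h1]
    have h2 : Real.exp (-(C * ε)) = Real.sqrt (Real.exp (-(C * ε)) ^ 2) :=
      (Real.sqrt_sq (Real.exp_pos _).le).symm
    rw [h2]
    apply Real.sqrt_le_sqrt
    have hE : 0 < Real.exp (-(C * ε)) := Real.exp_pos _
    have h3 : A * Z ^ 2 = Real.exp (-(C * ε)) * (Z * (Zhat⁻¹ * Z⁻¹ * Z)) := by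
      rw [hA]; ring
    have h4 : Zhat⁻¹ * Z⁻¹ * Z = Zhat⁻¹ := by
      rw [mul_assoc, inv_mul_cancel₀ hZ_pos.ne', mul_one]
    rw [h3, h4, sq]
    apply mul_le_mul_of_nonneg_left _ hE.le
    have h5 : Real.exp (-(C * ε)) ≤ Z / Zhat := (le_div_iff₀ hZhat_pos).mpr hZZ
    rwa [div_eq_mul_inv] at h5
  have : Real.exp (-C * ε) ≤ ∫ z, g z := by
    rw [neg_mul]
    exact hfinal.trans hint_lb
  linarith
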